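/- arXiv:1908.06038 — 3 statements merged into one kernel-verified Lean document; each statement's English description precedes it below -/
import Mathlib

section
/- (Bonanno–Molica Bisci nonsmooth variational principle.) Let X be a reflexive real Banach space and let Φ, Ψ : X → ℝ be locally Lipschitz functionals such that Φ is sequentially weakly lower semicontinuous and coercive (Φ(u) → +∞ as ‖u‖ → +∞), and Ψ is sequentially weakly upper semicontinuous. For every r > inf_X Φ put φ(r) := inf_{u ∈ Φ⁻¹((−∞,r))} [ (sup_{v ∈ Φ⁻¹((−∞,r))} Ψ(v)) − Ψ(u) ] / (r − Φ(u)). Then for each r > inf_X Φ and each λ ∈ (0, 1/φ(r)), the restriction of J_λ := Φ − λΨ to Φ⁻¹((−∞,r)) attains a global minimum at some u₀ ∈ Φ⁻¹((−∞,r)), and u₀ is a generalized critical point of J_λ in X, i.e. (J_λ)⁰(u₀; z) ≥ 0 for every z ∈ X (indeed u₀ is a local minimum of J_λ on X). -/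
/-!
Minimise `J = Φ - λΨ` over `D = {Φ < r}`, which is bounded by coercivity. In a reflexive space a
bounded sequence has a weakly convergent subsequence: the weak closure of its range is weakly
compact (Banach–Alaoglu in the bidual) and metrizable, because countably many functionals
separate the points of the separable closed span of the sequence. Weak semicontinuity turns a
minimising sequence into a point `u₀` with `J u₀ ≤ inf_D J`. The hypothesis `λ φ(r) < 1` gives a
point `u` with `J u < r - λ sup_D Ψ`, which forces `Φ u₀ < r`; so `u₀` minimises `J` on the open
set `D`, hence is a local minimum of `J`, and at a local minimum of a locally Lipschitz function
the Clarke difference quotients taken at the point itself are nonnegative and bounded above.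
-/

open Filter Topology

/-- The generalized (Clarke) directional derivative of `J` at `y` in the direction `z`. -/
noncomputable def clarkeDeriv {X : Type*} [NormedAddCommGroup X] [NormedSpace ℝ X]
    (J : X → ℝ) (y z : X) : ℝ :=
  Filter.limsup (fun p : X × ℝ => (J (p.1 + p.2 • z) - J p.1) / p.2)
    ((𝓝 y) ×ˢ (𝓝[>] (0 : ℝ)))

/-- A sequence converges weakly to `x` iff `φ (u n) → φ x` for every continuous
linear functional `φ`. -/
def WeakSeqTendsto {X : Type*} [NormedAddCommGroup X] [NormedSpace ℝ X]
    (u : ℕ → X) (x : X) : Prop :=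
  ∀ φ : X →L[ℝ] ℝ, Tendsto (fun n => φ (u n)) atTop (𝓝 (φ x))

section

open Function Set TopologicalSpace Bornology NormedSpace

/-- No boundedness is needed: both sides are the `sSup`/`sInf` of two sets exchanged by negation,
and `Real.sSup_neg` holds unconditionally. -/
theorem Real.liminf_neg {α : Type*} (u : α → ℝ) (f : Filter α) :
    liminf (fun n => -u n) f = -limsup u f := by
  rw [liminf_eq, limsup_eq, ← Real.sSup_neg]
  congr 1
  ext a
  simp [le_neg]

theorem exists_sub_mul_lt_of_mul_sInf_lt {α : Type*} {Φ Ψ : α → ℝ} {r S lam : ℝ}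
    (hr : ∃ u, Φ u < r) (hlam : 0 < lam)
    (h : lam * sInf ((fun u => (S - Ψ u) / (r - Φ u)) '' {u | Φ u < r}) < 1) :
    ∃ u, Φ u < r ∧ Φ u - lam * Ψ u < r - lam * S := by
  obtain ⟨_, ⟨u, hu, rfl⟩, hlt⟩ := exists_lt_of_csInf_lt (Set.Nonempty.image _ hr)
    ((lt_div_iff₀' hlam).mpr h)
  refine ⟨u, hu, ?_⟩
  rw [div_lt_div_iff₀ (sub_pos.mpr hu) hlam, one_mul] at hlt
  linarith

variable {X : Type*} [NormedAddCommGroup X] [NormedSpace ℝ X]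

theorem exists_countable_dual_separating {s : Set X} (hs : IsSeparable s) :
    ∃ F : Set (StrongDual ℝ X), F.Countable ∧ ∀ x ∈ s, x ≠ 0 → ∃ f ∈ F, f x ≠ 0 := by
  obtain ⟨c, hc, hsc⟩ := hs
  choose g hg₁ hg₂ using fun d : X => exists_dual_vector'' ℝ d
  refine ⟨g '' c, hc.image g, fun x hx hx0 => ?_⟩
  obtain ⟨d, hdc, hxd⟩ := Metric.mem_closure_iff.mp (hsc hx) (‖x‖ / 2) (by positivity)
  refine ⟨g d, mem_image_of_mem g hdc, ne_of_gt ?_⟩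
  rw [dist_eq_norm] at hxd
  have hgxd : |g d (x - d)| ≤ ‖x - d‖ :=
    ((g d).le_opNorm _).trans (mul_le_of_le_one_left (norm_nonneg _) (hg₁ d))
  have hd : ‖x‖ ≤ ‖d‖ + ‖x - d‖ := norm_le_insert' x d |>.trans (by rw [norm_sub_rev])
  have hsplit : g d x = ‖d‖ + g d (x - d) := by rw [map_sub, hg₂]; simp
  rw [hsplit]
  linarith [neg_abs_le (g d (x - d))]

theorem exists_strictMono_weakSeqTendsto
    (hrefl : Surjective (inclusionInDoubleDual ℝ X)) {v : ℕ → X} (hv : IsBounded (range v)) :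
    ∃ φ : ℕ → ℕ, StrictMono φ ∧ ∃ x, WeakSeqTendsto (v ∘ φ) x := by
  let Y := (Submodule.span ℝ (range v)).topologicalClosure
  have hY : (Y : Set X) = closure (Submodule.span ℝ (range v)) :=
    Submodule.topologicalClosure_coe _
  obtain ⟨F, hF, hFsep⟩ := exists_countable_dual_separating (s := (Y : Set X))
    (by rw [hY]; exact ((countable_range v).isSeparable.span).closure)
  let K := closure (toWeakSpace ℝ X '' range v)
  have hK : IsCompact K := by
    refine isCompact_closure_of_isBounded ℝ X _
      (by rwa [(toWeakSpace ℝ X).injective.preimage_image]) fun Λ _ => ?_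
    obtain ⟨x, hx⟩ := hrefl Λ
    exact ⟨toWeakSpace ℝ X x, hx⟩
  have hKY : K ⊆ toWeakSpace ℝ X '' Y := by
    rw [hY, (Submodule.span ℝ (range v)).convex.toWeakSpace_closure ℝ]
    exact closure_mono (image_mono Submodule.subset_span)
  have : CompactSpace K := isCompact_iff_compactSpace.mp hK
  have : Encodable F := hF.toEncodable
  have : MetrizableSpace K := by
    refine Metric.PiNatEmbed.TopologicalSpace.MetrizableSpace.of_countable_separating
      (fun (f : F) (k : K) => (f : StrongDual ℝ X) ((toWeakSpace ℝ X).symm k)) (fun f => ?_) ?_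
    · exact (WeakBilin.eval_continuous (topDualPairing ℝ X).flip (f : StrongDual ℝ X)).comp
        continuous_subtype_val
    · rintro ⟨k, hk⟩ ⟨k', hk'⟩ hkk'
      obtain ⟨y, hy, rfl⟩ := hKY hk
      obtain ⟨y', hy', rfl⟩ := hKY hk'
      have hne : y - y' ≠ 0 := sub_ne_zero.mpr fun h => hkk' (by subst h; rfl)
      obtain ⟨f, hfF, hf⟩ := hFsep _ (Y.sub_mem hy hy') hne
      exact ⟨⟨f, hfF⟩, fun h => hf (by simpa [sub_eq_zero] using h)⟩
  obtain ⟨k, φ, hφ, hk⟩ := CompactSpace.tendsto_subseq fun n =>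
    (⟨toWeakSpace ℝ X (v n), subset_closure (mem_image_of_mem _ (mem_range_self n))⟩ : K)
  refine ⟨φ, hφ, (toWeakSpace ℝ X).symm k, fun f => ?_⟩
  exact ((WeakBilin.eval_continuous (topDualPairing ℝ X).flip f).comp
    continuous_subtype_val).continuousAt.tendsto.comp hk

theorem WeakSeqTendsto.segment {w : ℕ → X} {x : X} (hw : WeakSeqTendsto w x) {t : ℕ → ℝ}
    (ht : ∀ n, t n ∈ Icc (0 : ℝ) 1) : WeakSeqTendsto (fun n => x + t n • (w n - x)) x := by
  intro f
  have hsmall : Tendsto (fun n => t n * (f (w n) - f x)) atTop (𝓝 0) := by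
    refine squeeze_zero_norm (fun n => ?_) (by simpa using ((hw f).sub_const (f x)).norm)
    rw [norm_mul]
    exact mul_le_of_le_one_left (norm_nonneg _) (abs_le.mpr ⟨by linarith [(ht n).1], (ht n).2⟩)
  simpa using tendsto_const_nhds.add hsmall

theorem WeakSeqTendsto.exists_eventually_eq {Φ : X → ℝ} (hΦ : Continuous Φ) {w : ℕ → X} {x : X}
    (hw : WeakSeqTendsto w x) {c : ℝ} (hwc : ∀ᶠ n in atTop, Φ (w n) ≤ c) (hcx : c ≤ Φ x) :
    ∃ z : ℕ → X, WeakSeqTendsto z x ∧ ∀ᶠ n in atTop, Φ (z n) = c := by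
  have hIVT : ∀ n, ∃ τ ∈ Icc (0 : ℝ) 1, Φ (w n) ≤ c → Φ (x + τ • (w n - x)) = c := by
    intro n
    by_cases hn : Φ (w n) ≤ c
    · have hcont : ContinuousOn (fun τ : ℝ => Φ (x + τ • (w n - x))) (Icc 0 1) := by
        fun_prop
      obtain ⟨τ, hτ, hτc⟩ := intermediate_value_Icc' zero_le_one hcont
        (by simpa using (⟨hn, hcx⟩ : c ∈ Icc (Φ (w n)) (Φ x)))
      exact ⟨τ, hτ, fun _ => hτc⟩
    · exact ⟨0, left_mem_Icc.mpr zero_le_one, fun h => absurd h hn⟩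
  choose t ht htc using hIVT
  exact ⟨_, hw.segment ht, hwc.mono htc⟩

theorem bddBelow_image_of_weakSeqLSC (hrefl : Surjective (inclusionInDoubleDual ℝ X))
    {Φ : X → ℝ} (hΦ : Continuous Φ)
    (hlsc : ∀ u x, WeakSeqTendsto u x → Φ x ≤ liminf (fun n => Φ (u n)) atTop)
    {s : Set X} (hs : IsBounded s) : BddBelow (Φ '' s) := by
  by_contra hunb
  have hdown : ∀ n : ℕ, ∃ u ∈ s, Φ u < -n := fun n => by
    obtain ⟨_, ⟨u, hu, rfl⟩, h⟩ := not_bddBelow_iff.mp hunb (-n)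
    exact ⟨u, hu, h⟩
  choose w hws hw using hdown
  have hw_bot : Tendsto (fun n => Φ (w n)) atTop atBot :=
    tendsto_atBot_mono (fun n => (hw n).le)
      (tendsto_neg_atTop_atBot.comp tendsto_natCast_atTop_atTop)
  obtain ⟨φ, hφ, x, hx⟩ := exists_strictMono_weakSeqTendsto hrefl
    (hs.subset (range_subset_iff.mpr hws))
  -- `liminf` of the unbounded sequence `Φ ∘ w ∘ φ` is a junk value, so move along the segments
  -- towards `x` to points where `Φ` equals `Φ x - 1`.
  obtain ⟨z, hz, hzc⟩ := hx.exists_eventually_eq hΦ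
    ((hw_bot.comp hφ.tendsto_atTop).eventually_le_atBot (Φ x - 1)) (sub_le_self _ zero_le_one)
  have := hlsc z x hz
  rw [liminf_congr hzc, liminf_const] at this
  linarith

theorem bddAbove_image_of_weakSeqUSC (hrefl : Surjective (inclusionInDoubleDual ℝ X))
    {Ψ : X → ℝ} (hΨ : Continuous Ψ)
    (husc : ∀ u x, WeakSeqTendsto u x → limsup (fun n => Ψ (u n)) atTop ≤ Ψ x)
    {s : Set X} (hs : IsBounded s) : BddAbove (Ψ '' s) := by
  have hneg := bddBelow_image_of_weakSeqLSC (Φ := fun v => -Ψ v) hrefl hΨ.neg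
    (fun u x hu => by rw [Real.liminf_neg]; exact neg_le_neg (husc u x hu)) hs
  rw [← bddBelow_neg, ← image_neg_eq_neg, image_image]
  exact hneg

theorem exists_sub_mul_le_of_tendsto (hrefl : Surjective (inclusionInDoubleDual ℝ X))
    {Φ Ψ : X → ℝ}
    (hΦwlsc : ∀ u x, WeakSeqTendsto u x → Φ x ≤ liminf (fun n => Φ (u n)) atTop)
    (hΨwusc : ∀ u x, WeakSeqTendsto u x → limsup (fun n => Ψ (u n)) atTop ≤ Ψ x)
    {lam a b S m : ℝ} (hlam : 0 < lam) {w : ℕ → X} (hw : IsBounded (range w))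
    (hΦw : ∀ n, Φ (w n) ∈ Icc a b) (hΨw : ∀ n, Ψ (w n) ≤ S)
    (hJw : Tendsto (fun n => Φ (w n) - lam * Ψ (w n)) atTop (𝓝 m)) :
    ∃ x, Φ x - lam * Ψ x ≤ m ∧ Φ x ≤ m + lam * S := by
  obtain ⟨φ, hφ, x, hx⟩ := exists_strictMono_weakSeqTendsto hrefl hw
  obtain ⟨α, -, ψ, hψ, hα⟩ := isCompact_Icc.tendsto_subseq fun n => hΦw (φ n)
  set z := fun n => w (φ (ψ n))
  have hz : WeakSeqTendsto z x := fun f => (hx f).comp hψ.tendsto_atTop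
  have hJz := hJw.comp (hφ.comp hψ).tendsto_atTop
  have hΨz : Tendsto (fun n => Ψ (z n)) atTop (𝓝 ((α - m) / lam)) :=
    ((hα.sub hJz).div_const lam).congr fun n => by field_simp; simp [z]
  have hΦx : Φ x ≤ α := (hΦwlsc z x hz).trans_eq hα.liminf_eq
  have hΨx : (α - m) / lam ≤ Ψ x := hΨz.limsup_eq ▸ hΨwusc z x hz
  have hαS : (α - m) / lam ≤ S := le_of_tendsto' hΨz fun n => hΨw _
  have hΨx' := mul_le_mul_of_nonneg_left hΨx hlam.le
  have hαS' := mul_le_mul_of_nonneg_left hαS hlam.le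
  rw [mul_div_cancel₀ _ hlam.ne'] at hΨx' hαS'
  exact ⟨x, by linarith, by linarith⟩

theorem exists_isMinOn_sublevel (hrefl : Surjective (inclusionInDoubleDual ℝ X))
    {Φ Ψ : X → ℝ} (hΦ : Continuous Φ) (hΨ : Continuous Ψ)
    (hΦwlsc : ∀ u x, WeakSeqTendsto u x → Φ x ≤ liminf (fun n => Φ (u n)) atTop)
    (hΨwusc : ∀ u x, WeakSeqTendsto u x → limsup (fun n => Ψ (u n)) atTop ≤ Ψ x)
    {r lam : ℝ} (hbdd : IsBounded {u | Φ u < r}) (hlam : 0 < lam)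
    (hcomp : ∃ u, Φ u < r ∧ Φ u - lam * Ψ u < r - lam * sSup (Ψ '' {v | Φ v < r})) :
    ∃ u₀, Φ u₀ < r ∧ IsMinOn (fun u => Φ u - lam * Ψ u) {u | Φ u < r} u₀ := by
  set D := {u | Φ u < r}
  set J := fun u => Φ u - lam * Ψ u
  obtain ⟨u₁, hu₁D, hu₁⟩ := hcomp
  have hΨS : ∀ u ∈ D, Ψ u ≤ sSup (Ψ '' D) := fun u hu =>
    le_csSup (bddAbove_image_of_weakSeqUSC hrefl hΨ hΨwusc hbdd) (mem_image_of_mem Ψ hu)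
  obtain ⟨c, hc⟩ := bddBelow_image_of_weakSeqLSC hrefl hΦ hΦwlsc hbdd
  have hcΦ : ∀ u ∈ D, c ≤ Φ u := fun u hu => hc (mem_image_of_mem Φ hu)
  have hJD : BddBelow (J '' D) := ⟨c - lam * sSup (Ψ '' D), by
    rintro _ ⟨u, hu, rfl⟩
    linarith [hcΦ u hu, mul_le_mul_of_nonneg_left (hΨS u hu) hlam.le]⟩
  have hmJ : ∀ u ∈ D, sInf (J '' D) ≤ J u := fun u hu => csInf_le hJD (mem_image_of_mem J hu)
  obtain ⟨a, -, ha, haJ⟩ := exists_seq_tendsto_sInf ⟨_, mem_image_of_mem J hu₁D⟩ hJD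
  choose w hwD hwJ using haJ
  obtain ⟨x, hJx, hΦx⟩ := exists_sub_mul_le_of_tendsto hrefl hΦwlsc hΨwusc hlam
    (hbdd.subset (range_subset_iff.mpr hwD)) (fun n => ⟨hcΦ _ (hwD n), (hwD n).le⟩)
    (fun n => hΨS _ (hwD n)) (ha.congr fun n => (hwJ n).symm)
  refine ⟨x, ?_, isMinOn_iff.mpr fun u hu => hJx.trans (hmJ u hu)⟩
  linarith [hmJ u₁ hu₁D]

theorem LocallyLipschitz.eventually_diffQuot_le {J : X → ℝ} (hJ : LocallyLipschitz J)
    (y z : X) : ∃ C, ∀ᶠ p in 𝓝 y ×ˢ 𝓝[>] (0 : ℝ), (J (p.1 + p.2 • z) - J p.1) / p.2 ≤ C := by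
  obtain ⟨K, t, ht, hK⟩ := hJ y
  have hpos : ∀ᶠ p in 𝓝 y ×ˢ 𝓝[>] (0 : ℝ), 0 < p.2 := tendsto_snd self_mem_nhdsWithin
  have hbase : ∀ᶠ p in 𝓝 y ×ˢ 𝓝[>] (0 : ℝ), p.1 ∈ t := tendsto_fst ht
  have hmoved : ∀ᶠ p in 𝓝 y ×ˢ 𝓝[>] (0 : ℝ), p.1 + p.2 • z ∈ t := by
    have hcont : Continuous fun p : X × ℝ => p.1 + p.2 • z := by fun_prop
    have hle : 𝓝 y ×ˢ 𝓝[>] (0 : ℝ) ≤ 𝓝 (y, 0) := by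
      rw [nhds_prod_eq]
      exact prod_mono le_rfl nhdsWithin_le_nhds
    exact (hcont.tendsto' (y, 0) y (by simp)).mono_left hle ht
  refine ⟨K * ‖z‖, ?_⟩
  filter_upwards [hpos, hbase, hmoved] with p hp hp₁ hp₂
  have hlip := hK.dist_le_mul _ hp₂ _ hp₁
  rw [Real.dist_eq, dist_eq_norm, add_sub_cancel_left, norm_smul, Real.norm_of_nonneg hp.le]
    at hlip
  rw [div_le_iff₀ hp]
  linarith [le_abs_self (J (p.1 + p.2 • z) - J p.1)]

theorem clarkeDeriv_nonneg_of_isLocalMin {J : X → ℝ} (hJ : LocallyLipschitz J) {y : X}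
    (hy : IsLocalMin J y) (z : X) : 0 ≤ clarkeDeriv J y z := by
  obtain ⟨C, hC⟩ := hJ.eventually_diffQuot_le y z
  refine le_limsup_of_frequently_le ?_ (isBoundedUnder_of_eventually_le hC)
  have hdir : Tendsto (fun t : ℝ => y + t • z) (𝓝[>] 0) (𝓝 y) := by
    have hcont : Continuous fun t : ℝ => y + t • z := by fun_prop
    exact (hcont.tendsto' 0 y (by simp)).mono_left nhdsWithin_le_nhds
  have hquot : ∀ᶠ t in 𝓝[>] (0 : ℝ), 0 ≤ (J (y + t • z) - J y) / t := by
    filter_upwards [hdir hy, self_mem_nhdsWithin] with t ht ht0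
    exact div_nonneg (sub_nonneg.mpr ht) (le_of_lt ht0)
  exact (tendsto_const_nhds.prodMk tendsto_id).frequently hquot.frequently

end

theorem stmt_5_general {X : Type*} [NormedAddCommGroup X] [NormedSpace ℝ X]
    (hrefl : Function.Surjective (NormedSpace.inclusionInDoubleDual ℝ X))
    (Φ Ψ : X → ℝ) (hΦlip : LocallyLipschitz Φ) (hΨlip : LocallyLipschitz Ψ)
    (hΦwlsc : ∀ (u : ℕ → X) (x : X), WeakSeqTendsto u x →
      Φ x ≤ liminf (fun n => Φ (u n)) atTop)
    (hΦcoer : ∀ M : ℝ, ∃ R : ℝ, ∀ u : X, R ≤ ‖u‖ → M ≤ Φ u)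
    (hΨwusc : ∀ (u : ℕ → X) (x : X), WeakSeqTendsto u x →
      limsup (fun n => Ψ (u n)) atTop ≤ Ψ x)
    (r : ℝ) (hr : ∃ u, Φ u < r) (lam : ℝ) (hlam : 0 < lam)
    (hlam' : lam * sInf ((fun u => (sSup (Ψ '' {v | Φ v < r}) - Ψ u) / (r - Φ u)) ''
      {u | Φ u < r}) < 1) :
    ∃ u₀ : X, Φ u₀ < r ∧
      (∀ u : X, Φ u < r → Φ u₀ - lam * Ψ u₀ ≤ Φ u - lam * Ψ u) ∧
      (∀ z : X, 0 ≤ clarkeDeriv (fun u => Φ u - lam * Ψ u) u₀ z) ∧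
      (∀ᶠ u in 𝓝 u₀, Φ u₀ - lam * Ψ u₀ ≤ Φ u - lam * Ψ u) := by
  obtain ⟨R, hR⟩ := hΦcoer r
  have hbdd : Bornology.IsBounded {u | Φ u < r} :=
    (Metric.isBounded_closedBall (x := 0) (r := R)).subset fun u hu => by
      simpa using (not_le.mp (mt (hR u) (not_le.mpr hu))).le
  obtain ⟨u₀, hu₀, hmin⟩ := exists_isMinOn_sublevel hrefl hΦlip.continuous hΨlip.continuous
    hΦwlsc hΨwusc hbdd hlam (exists_sub_mul_lt_of_mul_sInf_lt hr hlam hlam')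
  have hloc : IsLocalMin (fun u => Φ u - lam * Ψ u) u₀ :=
    hmin.isLocalMin ((isOpen_lt hΦlip.continuous continuous_const).mem_nhds hu₀)
  have hJlip : LocallyLipschitz fun u => Φ u - lam * Ψ u :=
    hΦlip.sub ((lipschitzWith_smul lam).locallyLipschitz.comp hΨlip)
  exact ⟨u₀, hu₀, fun u hu => hmin hu, clarkeDeriv_nonneg_of_isLocalMin hJlip hloc, hloc⟩

/-- **Bonanno–Molica Bisci nonsmooth variational principle.**
Let `X` be a reflexive real Banach space (the canonical embedding into the double dual
is surjective) and `Φ, Ψ : X → ℝ` locally Lipschitz, with `Φ` sequentially weakly lower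
semicontinuous and coercive, and `Ψ` sequentially weakly upper semicontinuous.  For
`r > inf_X Φ` (i.e. `∃ u, Φ u < r`) put
`φ(r) := inf_{Φ u < r} [ (sup_{Φ v < r} Ψ v) − Ψ u ] / (r − Φ u)`.
Then for each `λ > 0` with `λ·φ(r) < 1` (so `λ ∈ (0, 1/φ(r))`, the interval being
`(0, ∞)` when `φ(r) = 0`), the restriction of `J_λ := Φ − λΨ` to `Φ⁻¹((−∞,r))` attains a
global minimum at some `u₀`, which is a generalized critical point, indeed a local
minimum, of `J_λ` on `X`. -/
theorem stmt_5 {X : Type*} [NormedAddCommGroup X] [NormedSpace ℝ X] [CompleteSpace X]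
    (hrefl : Function.Surjective (NormedSpace.inclusionInDoubleDual ℝ X))
    (Φ Ψ : X → ℝ) (hΦlip : LocallyLipschitz Φ) (hΨlip : LocallyLipschitz Ψ)
    (hΦwlsc : ∀ (u : ℕ → X) (x : X), WeakSeqTendsto u x →
      Φ x ≤ liminf (fun n => Φ (u n)) atTop)
    (hΦcoer : ∀ M : ℝ, ∃ R : ℝ, ∀ u : X, R ≤ ‖u‖ → M ≤ Φ u)
    (hΨwusc : ∀ (u : ℕ → X) (x : X), WeakSeqTendsto u x →
      limsup (fun n => Ψ (u n)) atTop ≤ Ψ x)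
    (r : ℝ) (hr : ∃ u, Φ u < r) (lam : ℝ) (hlam : 0 < lam)
    (hlam' : lam * sInf ((fun u => (sSup (Ψ '' {v | Φ v < r}) - Ψ u) / (r - Φ u)) ''
      {u | Φ u < r}) < 1) :
    ∃ u₀ : X, Φ u₀ < r ∧
      (∀ u : X, Φ u < r → Φ u₀ - lam * Ψ u₀ ≤ Φ u - lam * Ψ u) ∧
      (∀ z : X, 0 ≤ clarkeDeriv (fun u => Φ u - lam * Ψ u) u₀ z) ∧
      (∀ᶠ u in 𝓝 u₀, Φ u₀ - lam * Ψ u₀ ≤ Φ u - lam * Ψ u) :=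
  stmt_5_general hrefl Φ Ψ hΦlip hΨlip hΦwlsc hΦcoer hΨwusc r hr lam hlam hlam'
end

section
/- (Nonsmooth principle of symmetric criticality of Krawcewicz–Marzantowicz, Banach space version.) Let X be a real Banach space, let G be a compact topological group acting continuously on X such that the action of each g ∈ G is a linear isometry of X, and let J : X → ℝ be locally Lipschitz and G-invariant (J(g·y) = J(y) for all g ∈ G, y ∈ X). Let Fix_G(X) := {y ∈ X : g·y = y for all g ∈ G}, a closed linear subspace of X, and let 𝒥 denote the restriction of J to the Banach space Fix_G(X). If u ∈ Fix_G(X) is a generalized critical point of 𝒥 (i.e. 𝒥⁰(u;v) ≥ 0 for every v ∈ Fix_G(X), the Clarke directional derivative being computed in Fix_G(X)), then u is a generalized critical point of J in X (i.e. J⁰(u;z) ≥ 0 for every z ∈ X). -/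
/-!
The Clarke derivative `φ := J⁰(u; ·)` of a function that is `K`-Lipschitz near `u` is
`K`-Lipschitz, subadditive and positively homogeneous, hence convex and continuous. If `u` is
fixed by `G` and `J` is invariant, each `g` is a linear homeomorphism fixing `u` and preserving
`J`, so `φ` is `G`-invariant. Averaging the orbit of `z` over Haar measure gives a fixed vector
`A`, and Jensen's inequality gives `φ A ≤ φ z`. Finally `𝒥⁰(u; A) ≤ φ A`, because the base points
of `𝒥⁰` range only over `Fix_G(X)`, and `𝒥⁰(u; A) ≥ 0` by hypothesis.
-/

open Filter Topology

/-- The generalized (Clarke) directional derivative of the restriction of `J` to a set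
`s` (the base point varies inside `s`); for a closed linear subspace `s` and `y, z ∈ s`
this is the Clarke derivative computed in the Banach space `s`. -/
noncomputable def clarkeDerivOn {X : Type*} [NormedAddCommGroup X] [NormedSpace ℝ X]
    (J : X → ℝ) (s : Set X) (y z : X) : ℝ :=
  Filter.limsup (fun p : X × ℝ => (J (p.1 + p.2 • z) - J p.1) / p.2)
    ((𝓝[s] y) ×ˢ (𝓝[>] (0 : ℝ)))

open MeasureTheory Set
open scoped NNReal

section ClarkeFilter

variable {X : Type*} [TopologicalSpace X]

def clarkeFilter (u : X) : Filter (X × ℝ) := 𝓝 u ×ˢ 𝓝[>] 0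

instance (u : X) : (clarkeFilter u).NeBot := by
  unfold clarkeFilter; infer_instance

lemma eventually_pos_clarkeFilter (u : X) : ∀ᶠ p in clarkeFilter u, 0 < p.2 :=
  tendsto_snd.eventually self_mem_nhdsWithin

lemma map_rescale_clarkeFilter (u : X) {c : ℝ} (hc : 0 < c) :
    map (fun p : X × ℝ => (p.1, c * p.2)) (clarkeFilter u) = clarkeFilter u := by
  have hmap : map (c * ·) (𝓝[>] (0 : ℝ)) = 𝓝[>] 0 := by
    nth_rw 1 [← comap_mulLeft_nhdsGT_zero hc]
    exact map_comap_of_surjective (fun r => ⟨c⁻¹ * r, mul_inv_cancel_left₀ hc.ne' r⟩) _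
  rw [clarkeFilter, show (fun p : X × ℝ => (p.1, c * p.2)) = Prod.map id (c * ·) from rfl,
    ← prod_map_map_eq', map_id, hmap]

end ClarkeFilter

section ClarkeDerivative

variable {X : Type*} [NormedAddCommGroup X] [NormedSpace ℝ X] {J : X → ℝ} {u : X} {K : ℝ≥0}
  {t : Set X}

noncomputable def clarkeQuotient (J : X → ℝ) (w : X) (p : X × ℝ) : ℝ :=
  (J (p.1 + p.2 • w) - J p.1) / p.2

lemma clarkeDeriv_eq_limsup (J : X → ℝ) (u w : X) :
    clarkeDeriv J u w = limsup (clarkeQuotient J w) (clarkeFilter u) := rfl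

lemma clarkeQuotient_zero (J : X → ℝ) : clarkeQuotient J 0 = 0 := by
  ext p
  simp [clarkeQuotient]

lemma clarkeQuotient_add (J : X → ℝ) (w w' : X) (p : X × ℝ) :
    clarkeQuotient J (w + w') p =
      clarkeQuotient J w (p.1 + p.2 • w', p.2) + clarkeQuotient J w' p := by
  simp only [clarkeQuotient, smul_add]
  rw [← add_div, ← add_assoc, add_right_comm p.1, sub_add_sub_cancel]

lemma clarkeQuotient_smul (J : X → ℝ) {c : ℝ} (hc : c ≠ 0) (w : X) (p : X × ℝ) :
    clarkeQuotient J (c • w) p = c * clarkeQuotient J w (p.1, c * p.2) := by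
  simp only [clarkeQuotient, smul_smul, mul_comm p.2 c, ← mul_div_assoc,
    mul_div_mul_left _ _ hc]

lemma tendsto_add_smul_clarkeFilter (u w : X) :
    Tendsto (fun p : X × ℝ => p.1 + p.2 • w) (clarkeFilter u) (𝓝 u) := by
  have h : Tendsto (fun p : X × ℝ => p.1 + p.2 • w) (𝓝 (u, 0)) (𝓝 (u + (0 : ℝ) • w)) :=
    (continuous_fst.add (continuous_snd.smul continuous_const)).tendsto _
  rw [zero_smul, add_zero] at h
  exact h.mono_left (by rw [nhds_prod_eq]; exact prod_mono le_rfl nhdsWithin_le_nhds)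

lemma tendsto_translate_clarkeFilter (u w : X) :
    Tendsto (fun p : X × ℝ => (p.1 + p.2 • w, p.2)) (clarkeFilter u) (clarkeFilter u) :=
  (tendsto_add_smul_clarkeFilter u w).prodMk tendsto_snd

lemma eventually_abs_clarkeQuotient_sub_le (ht : t ∈ 𝓝 u) (hK : LipschitzOnWith K J t) (w w' : X) :
    ∀ᶠ p in clarkeFilter u, |clarkeQuotient J w p - clarkeQuotient J w' p| ≤ K * ‖w - w'‖ := by
  filter_upwards [tendsto_add_smul_clarkeFilter u w ht, tendsto_add_smul_clarkeFilter u w' ht,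
    eventually_pos_clarkeFilter u] with p hw hw' hp
  have hdiff : clarkeQuotient J w p - clarkeQuotient J w' p =
      (J (p.1 + p.2 • w) - J (p.1 + p.2 • w')) / p.2 := by
    simp only [clarkeQuotient]
    ring
  rw [hdiff, abs_div, abs_of_pos hp, div_le_iff₀ hp]
  calc |J (p.1 + p.2 • w) - J (p.1 + p.2 • w')| ≤ K * ‖p.2 • (w - w')‖ := by
        simpa [Real.dist_eq, dist_eq_norm, smul_sub] using hK.dist_le_mul _ hw _ hw'
    _ = K * ‖w - w'‖ * p.2 := by
        rw [norm_smul, Real.norm_of_nonneg hp.le]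
        ring

lemma isBoundedUnder_clarkeQuotient (ht : t ∈ 𝓝 u) (hK : LipschitzOnWith K J t)
    {F : Filter (X × ℝ)} (hF : F ≤ clarkeFilter u) (w : X) :
    IsBoundedUnder (· ≤ ·) F (clarkeQuotient J w) ∧
      IsBoundedUnder (· ≥ ·) F (clarkeQuotient J w) := by
  rw [← isBoundedUnder_le_abs]
  refine isBoundedUnder_of_eventually_le (a := K * ‖w‖) (Eventually.filter_mono hF ?_)
  simpa [clarkeQuotient_zero] using eventually_abs_clarkeQuotient_sub_le ht hK w 0

lemma clarkeDeriv_le_add_mul_norm_sub (ht : t ∈ 𝓝 u) (hK : LipschitzOnWith K J t) (w w' : X) :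
    clarkeDeriv J u w ≤ clarkeDeriv J u w' + K * ‖w - w'‖ := by
  obtain ⟨-, hge⟩ := isBoundedUnder_clarkeQuotient ht hK le_rfl w
  obtain ⟨hle', hge'⟩ := isBoundedUnder_clarkeQuotient ht hK le_rfl w'
  rw [clarkeDeriv_eq_limsup, clarkeDeriv_eq_limsup,
    ← limsup_add_const _ _ _ hle' hge'.isCoboundedUnder_le]
  refine limsup_le_limsup ?_ hge.isCoboundedUnder_le
    (isBoundedUnder_le_add hle' isBoundedUnder_const)
  filter_upwards [eventually_abs_clarkeQuotient_sub_le ht hK w w'] with p hp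
  linarith [(abs_le.mp hp).2]

lemma lipschitzWith_clarkeDeriv (ht : t ∈ 𝓝 u) (hK : LipschitzOnWith K J t) :
    LipschitzWith K (clarkeDeriv J u) :=
  .of_le_add_mul K fun w w' => by
    simpa [dist_eq_norm] using clarkeDeriv_le_add_mul_norm_sub ht hK w w'

lemma clarkeDeriv_add_le (ht : t ∈ 𝓝 u) (hK : LipschitzOnWith K J t) (w w' : X) :
    clarkeDeriv J u (w + w') ≤ clarkeDeriv J u w + clarkeDeriv J u w' := by
  set m : X × ℝ → X × ℝ := fun p => (p.1 + p.2 • w', p.2)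
  have hm : Tendsto m (clarkeFilter u) (clarkeFilter u) := tendsto_translate_clarkeFilter u w'
  obtain ⟨hle, hge⟩ := isBoundedUnder_clarkeQuotient ht hK hm w
  obtain ⟨hleL, -⟩ := isBoundedUnder_clarkeQuotient ht hK le_rfl w
  obtain ⟨hle', hge'⟩ := isBoundedUnder_clarkeQuotient ht hK le_rfl w'
  have hq : clarkeQuotient J (w + w') = clarkeQuotient J w ∘ m + clarkeQuotient J w' :=
    funext (clarkeQuotient_add J w w')
  calc clarkeDeriv J u (w + w')
      _ ≤ limsup (clarkeQuotient J w ∘ m) (clarkeFilter u) + clarkeDeriv J u w' := by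
        rw [clarkeDeriv_eq_limsup, hq]
        exact limsup_add_le hge hle hge'.isCoboundedUnder_le hle'
      _ ≤ clarkeDeriv J u w + clarkeDeriv J u w' :=
        add_le_add (hm.limsup_comp_le_limsup hge.isCoboundedUnder_le hleL) le_rfl

lemma clarkeDeriv_smul_of_nonneg (ht : t ∈ 𝓝 u) (hK : LipschitzOnWith K J t) {c : ℝ} (hc : 0 ≤ c)
    (w : X) :
    clarkeDeriv J u (c • w) = c * clarkeDeriv J u w := by
  rcases hc.eq_or_lt with rfl | hc
  · rw [zero_smul, zero_mul, clarkeDeriv_eq_limsup, clarkeQuotient_zero]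
    exact limsup_const 0
  set m : X × ℝ → X × ℝ := fun p => (p.1, c * p.2)
  have hmap : map m (clarkeFilter u) = clarkeFilter u := map_rescale_clarkeFilter u hc
  obtain ⟨hle, hge⟩ := isBoundedUnder_clarkeQuotient ht hK hmap.le w
  have hq : clarkeQuotient J (c • w) = (c * ·) ∘ (clarkeQuotient J w ∘ m) :=
    funext (clarkeQuotient_smul J hc.ne' w)
  calc clarkeDeriv J u (c • w)
      _ = limsup ((c * ·) ∘ (clarkeQuotient J w ∘ m)) (clarkeFilter u) := by
        rw [clarkeDeriv_eq_limsup, hq]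
      _ = c * limsup (clarkeQuotient J w ∘ m) (clarkeFilter u) :=
        ((monotone_mul_left_of_nonneg hc.le).map_limsup_of_continuousAt _
          (continuous_const_mul c).continuousAt hle hge.isCoboundedUnder_le).symm
      _ = c * clarkeDeriv J u w := by rw [limsup_comp, hmap, clarkeDeriv_eq_limsup]

lemma convexOn_clarkeDeriv (ht : t ∈ 𝓝 u) (hK : LipschitzOnWith K J t) :
    ConvexOn ℝ univ (clarkeDeriv J u) :=
  ⟨convex_univ, fun x _ y _ a b ha hb _ => by
    calc _ ≤ clarkeDeriv J u (a • x) + clarkeDeriv J u (b • y) := clarkeDeriv_add_le ht hK _ _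
      _ = a • clarkeDeriv J u x + b • clarkeDeriv J u y := by
        rw [clarkeDeriv_smul_of_nonneg ht hK ha, clarkeDeriv_smul_of_nonneg ht hK hb, smul_eq_mul,
          smul_eq_mul]⟩

lemma clarkeDeriv_apply_eq_of_invariant (e : X ≃L[ℝ] X) (he : e u = u) (hJ : ∀ x, J (e x) = J x)
    (w : X) :
    clarkeDeriv J u (e w) = clarkeDeriv J u w := by
  have hq : clarkeQuotient J (e w) = clarkeQuotient J w ∘ Prod.map e.symm id := by
    ext ⟨x, r⟩
    simp only [clarkeQuotient, Function.comp_apply, Prod.map_fst, Prod.map_snd, id]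
    rw [← hJ (e.symm x + r • w), map_add, map_smul, e.apply_symm_apply, ← hJ (e.symm x),
      e.apply_symm_apply]
  have hmap : map (Prod.map e.symm id) (clarkeFilter u) = clarkeFilter u := by
    rw [clarkeFilter, ← prod_map_map_eq', e.symm.map_nhds_eq, map_id, e.symm_apply_eq.2 he.symm]
  rw [clarkeDeriv_eq_limsup, hq, limsup_comp, hmap, clarkeDeriv_eq_limsup]

lemma clarkeDerivOn_le_clarkeDeriv (ht : t ∈ 𝓝 u) (hK : LipschitzOnWith K J t) {s : Set X}
    (hu : u ∈ s) (w : X) :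
    clarkeDerivOn J s u w ≤ clarkeDeriv J u w := by
  have hle : 𝓝[s] u ×ˢ 𝓝[>] (0 : ℝ) ≤ clarkeFilter u := prod_mono nhdsWithin_le_nhds le_rfl
  have : (𝓝[s] u).NeBot := mem_closure_iff_nhdsWithin_neBot.mp (subset_closure hu)
  exact limsup_le_limsup_of_le hle
    (isBoundedUnder_clarkeQuotient ht hK hle w).2.isCoboundedUnder_le
    (isBoundedUnder_clarkeQuotient ht hK le_rfl w).1

end ClarkeDerivative

section Averaging

variable {G X : Type*} [NormedAddCommGroup X] [NormedSpace ℝ X]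

def smulContinuousLinearEquiv [Group G] [MulAction G X] [ContinuousConstSMul G X]
    (hlin : ∀ g : G, IsLinearMap ℝ (fun y : X => g • y)) (g : G) : X ≃L[ℝ] X where
  toFun := (g • ·)
  invFun := (g⁻¹ • ·)
  map_add' := (hlin g).map_add
  map_smul' := (hlin g).map_smul
  left_inv := inv_smul_smul g
  right_inv := smul_inv_smul g
  continuous_toFun := continuous_const_smul g
  continuous_invFun := continuous_const_smul g⁻¹

lemma average_smul_mem_fixedPoints [Group G] [MeasurableSpace G] [MeasurableMul G]
    [MulAction G X] [ContinuousConstSMul G X]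
    (hlin : ∀ g : G, IsLinearMap ℝ (fun y : X => g • y)) (μ : Measure G) [μ.IsMulLeftInvariant]
    (z : X) : ⨍ g, g • z ∂μ ∈ MulAction.fixedPoints G X := by
  intro g₀
  calc g₀ • ⨍ g, g • z ∂μ = ⨍ g, g₀ • g • z ∂μ :=
        ((smulContinuousLinearEquiv hlin g₀).integral_comp_comm _).symm
    _ = ⨍ g, (g₀ * g) • z ∂μ := by simp_rw [mul_smul]
    _ = ⨍ g, g • z ∂μ := integral_mul_left_eq_self (fun g => g • z) g₀

lemma ConvexOn.map_average_smul_le [TopologicalSpace G] [CompactSpace G] [MeasurableSpace G]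
    [OpensMeasurableSpace G] [CompleteSpace X] [SMul G X] [ContinuousSMul G X]
    {φ : X → ℝ} (hφ : ConvexOn ℝ univ φ) (hφc : Continuous φ)
    (hinv : ∀ (g : G) z, φ (g • z) = φ z)
    (μ : Measure G) [IsFiniteMeasure μ] [NeZero μ] (z : X) : φ (⨍ g, g • z ∂μ) ≤ φ z := by
  have hc : Continuous fun g : G => g • z := continuous_id.smul continuous_const
  calc φ (⨍ g, g • z ∂μ) ≤ ⨍ g, φ (g • z) ∂μ :=
        hφ.map_average_le hφc.continuousOn isClosed_univ (ae_of_all _ fun _ => mem_univ _)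
          (hc.integrable_of_hasCompactSupport (.of_compactSpace _))
          ((hφc.comp hc).integrable_of_hasCompactSupport (.of_compactSpace _))
    _ = φ z := by simp only [hinv, average_const]

end Averaging

theorem stmt_6_general {X : Type*} [NormedAddCommGroup X] [NormedSpace ℝ X] [CompleteSpace X]
    (G : Type*) [Group G] [TopologicalSpace G] [IsTopologicalGroup G] [CompactSpace G]
    [MulAction G X] [ContinuousSMul G X]
    (hlin : ∀ g : G, IsLinearMap ℝ (fun y : X => g • y))
    (J : X → ℝ) (hJ : LocallyLipschitz J)
    (hinv : ∀ (g : G) (y : X), J (g • y) = J y)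
    (u : X) (hu : u ∈ {y : X | ∀ g : G, g • y = y})
    (hcrit : ∀ v ∈ {y : X | ∀ g : G, g • y = y},
      0 ≤ clarkeDerivOn J {y : X | ∀ g : G, g • y = y} u v) :
    ∀ z : X, 0 ≤ clarkeDeriv J u z := by
  intro z
  obtain ⟨K, t, ht, hK⟩ := hJ u
  borelize G
  let μ : Measure G := Measure.haar
  let A := ⨍ g, g • z ∂μ
  have hφ : ∀ (g : G) w, clarkeDeriv J u (g • w) = clarkeDeriv J u w := fun g =>
    clarkeDeriv_apply_eq_of_invariant (smulContinuousLinearEquiv hlin g) (hu g) (hinv g)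
  calc 0 ≤ clarkeDerivOn J {y : X | ∀ g : G, g • y = y} u A :=
        hcrit A (average_smul_mem_fixedPoints hlin μ z)
    _ ≤ clarkeDeriv J u A := clarkeDerivOn_le_clarkeDeriv ht hK hu A
    _ ≤ clarkeDeriv J u z := (convexOn_clarkeDeriv ht hK).map_average_smul_le
        (lipschitzWith_clarkeDeriv ht hK).continuous hφ μ z

/-- **Nonsmooth principle of symmetric criticality (Krawcewicz–Marzantowicz), Banach
space version.**  Let `G` be a compact topological group acting continuously on a real
Banach space `X` by linear isometries, and let `J : X → ℝ` be locally Lipschitz and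
`G`-invariant.  If `u` lies in the fixed-point subspace `Fix_G(X)` and is a generalized
critical point of the restriction of `J` to `Fix_G(X)`, then `u` is a generalized
critical point of `J` on `X`. -/
theorem stmt_6 {X : Type*} [NormedAddCommGroup X] [NormedSpace ℝ X] [CompleteSpace X]
    (G : Type*) [Group G] [TopologicalSpace G] [IsTopologicalGroup G] [CompactSpace G]
    [MulAction G X] [ContinuousSMul G X]
    (hlin : ∀ g : G, IsLinearMap ℝ (fun y : X => g • y))
    (hiso : ∀ (g : G) (y : X), ‖g • y‖ = ‖y‖)
    (J : X → ℝ) (hJ : LocallyLipschitz J)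
    (hinv : ∀ (g : G) (y : X), J (g • y) = J y)
    (u : X) (hu : u ∈ {y : X | ∀ g : G, g • y = y})
    (hcrit : ∀ v ∈ {y : X | ∀ g : G, g • y = y},
      0 ≤ clarkeDerivOn J {y : X | ∀ g : G, g • y = y} u v) :
    ∀ z : X, 0 ≤ clarkeDeriv J u z :=
  stmt_6_general G hlin J hJ hinv u hu hcrit
end

section
/- Let d = 6 or d ≥ 8, set τ_d := (−1)^d + ⌊(d−3)/2⌋ and J_d := {1, …, τ_d}. For i ∈ J_d, identify ℝ^d with ℝ^{i+1} × ℝ^{d−2i−2} × ℝ^{i+1} if i ≠ (d−2)/2 and with ℝ^{d/2} × ℝ^{d/2} if i = (d−2)/2; let H_{d,i} be the subgroup O(i+1) × O(d−2i−2) × O(i+1) of O(d) (resp. O(d/2) × O(d/2)) acting blockwise, and let η_i be the block-swap involution η_i(x₁,x₂,x₃) := (x₃,x₂,x₁) (resp. η_i(x₁,x₃) := (x₃,x₁)). Say that u ∈ L²(ℝ^d) is H_{d,η_i}-invariant if u(g x) = u(x) a.e. for every g ∈ H_{d,i} and u(η_i x) = −u(x) a.e. If i, j ∈ J_d with i ≠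 j and u ∈ L²(ℝ^d) is both H_{d,η_i}-invariant and H_{d,η_j}-invariant, then u = 0 almost everywhere. -/
/-!
Coordinate permutations are volume-preserving isometries, so the permutations `σ` with
`u ∘ σ = u` a.e. form a subgroup of `S_d`. For `i < j` it contains every transposition inside
a block of either decomposition, and these connect all coordinates: the middle `i`-block meets
both outer `j`-blocks. Hence the subgroup is all of `S_d`; in particular `u ∘ η_i = u`, which
together with `u ∘ η_i = -u` forces `u = 0`.
-/

open Filter Topology MeasureTheory

/-- The index permutation of `Fin d` swapping the first block `{0,…,i}` with the last
block `{d−1−i,…,d−1}` and fixing the middle block.  (Under the standing assumption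
`2(i+1) ≤ d` the `% d` is never active and this is precisely the block swap
`(x₁,x₂,x₃) ↦ (x₃,x₂,x₁)`.) -/
def swapIdx (d i : ℕ) (j : Fin d) : Fin d :=
  ⟨(if (j : ℕ) ≤ i then (j : ℕ) + (d - 1 - i)
    else if d - 1 - i ≤ (j : ℕ) then (j : ℕ) - (d - 1 - i)
    else (j : ℕ)) % d, Nat.mod_lt _ j.pos⟩

/-- The block-swap involution `η_i : ℝ^d → ℝ^d`, `η_i(x₁,x₂,x₃) = (x₃,x₂,x₁)`
(resp. `η_i(x₁,x₃) = (x₃,x₁)` when the middle block is empty). -/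
def blockSwap (d i : ℕ) (x : EuclideanSpace ℝ (Fin d)) : EuclideanSpace ℝ (Fin d) :=
  WithLp.toLp 2 (fun j => x (swapIdx d i j))

/-- The three coordinate blocks of `ℝ^d ≅ ℝ^{i+1} × ℝ^{d−2i−2} × ℝ^{i+1}` (for
`i = (d−2)/2` the middle block is empty and this is `ℝ^{d/2} × ℝ^{d/2}`). -/
def blockSet (d i : ℕ) (k : Fin 3) : Set (Fin d) :=
  if k = 0 then {j : Fin d | (j : ℕ) < i + 1}
  else if k = 1 then {j : Fin d | i + 1 ≤ (j : ℕ) ∧ (j : ℕ) < d - (i + 1)}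
  else {j : Fin d | d - (i + 1) ≤ (j : ℕ)}

/-- A linear isometry of `ℝ^d` is block-diagonal (i.e. belongs to the subgroup
`H_{d,i} = O(i+1) × O(d−2i−2) × O(i+1)`, resp. `O(d/2) × O(d/2)`) iff it maps each of
the three coordinate subspaces into itself. -/
def IsBlockDiag (d i : ℕ)
    (g : EuclideanSpace ℝ (Fin d) ≃ₗᵢ[ℝ] EuclideanSpace ℝ (Fin d)) : Prop :=
  ∀ k : Fin 3, ∀ x : EuclideanSpace ℝ (Fin d),
    (∀ j : Fin d, j ∉ blockSet d i k → x j = 0) →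
    ∀ j : Fin d, j ∉ blockSet d i k → g x j = 0

/-- `u` is `H_{d,η_i}`-invariant: `u(gx) = u(x)` a.e. for every `g ∈ H_{d,i}` and
`u(η_i x) = −u(x)` a.e. -/
def HInvariant (d i : ℕ) (u : EuclideanSpace ℝ (Fin d) → ℝ) : Prop :=
  (∀ g : EuclideanSpace ℝ (Fin d) ≃ₗᵢ[ℝ] EuclideanSpace ℝ (Fin d),
    IsBlockDiag d i g → ∀ᵐ x ∂volume, u (g x) = u x) ∧
  (∀ᵐ x ∂volume, u (blockSwap d i x) = -u x)

open Equiv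

section AEInvariant

variable {E β : Type*} [NormedAddCommGroup E] [InnerProductSpace ℝ E] [FiniteDimensional ℝ E]
  [MeasurableSpace E] [BorelSpace E]

def aeInvariantIsometries (u : E → β) : Subgroup (E ≃ₗᵢ[ℝ] E) where
  carrier := {g | ∀ᵐ x, u (g x) = u x}
  one_mem' := by simp
  mul_mem' {g h} hg hh := by
    show ∀ᵐ x, u (g (h x)) = u x
    filter_upwards [h.measurePreserving.quasiMeasurePreserving.ae hg, hh] with x hgx hhx
    exact hgx.trans hhx
  inv_mem' {g} hg := by
    filter_upwards [g.symm.measurePreserving.quasiMeasurePreserving.ae hg] with x hx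
    simpa using hx.symm

end AEInvariant

section CoordPerm

variable {ι β : Type*} [Fintype ι]

variable (ι) in
noncomputable def coordPermIsometry :
    Perm ι →* (EuclideanSpace ℝ ι ≃ₗᵢ[ℝ] EuclideanSpace ℝ ι) where
  toFun σ := LinearIsometryEquiv.piLpCongrLeft 2 ℝ ℝ σ
  map_one' := by ext; rfl
  map_mul' σ τ := by ext; simp [Equiv.piCongrLeft', Perm.mul_def]

theorem coordPermIsometry_apply (σ : Perm ι) (x : EuclideanSpace ℝ ι) (m : ι) :
    coordPermIsometry ι σ x m = x (σ.symm m) := by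
  simp [coordPermIsometry, Equiv.piCongrLeft']

noncomputable def aeInvariantPerms (u : EuclideanSpace ℝ ι → β) : Subgroup (Perm ι) :=
  (aeInvariantIsometries u).comap (coordPermIsometry ι)

end CoordPerm

theorem Equiv.Perm.eq_top_of_forall_swap_mem {α : Type*} [Finite α] [DecidableEq α]
    {H : Subgroup (Perm α)} (c : α) (h : ∀ a, swap a c ∈ H) : H = ⊤ := by
  rw [eq_top_iff, ← Perm.closure_isSwap, Subgroup.closure_le]
  rintro _ ⟨a, b, -, rfl⟩
  exact SubmonoidClass.swap_mem_trans H (h a) (swap_comm b c ▸ h b)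

section Blocks

variable {d i : ℕ}

theorem swap_mem_blockSet_iff {a b : Fin d} (h₀ : (a : ℕ) < i + 1 ↔ (b : ℕ) < i + 1)
    (h₂ : d - (i + 1) ≤ (a : ℕ) ↔ d - (i + 1) ≤ (b : ℕ)) (k : Fin 3) (m : Fin d) :
    swap a b m ∈ blockSet d i k ↔ m ∈ blockSet d i k := by
  rw [swap_apply_def]
  split_ifs with ha hb <;> subst_vars <;> fin_cases k <;> simp [blockSet] <;> omega

theorem isBlockDiag_swap {a b : Fin d} (h₀ : (a : ℕ) < i + 1 ↔ (b : ℕ) < i + 1)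
    (h₂ : d - (i + 1) ≤ (a : ℕ) ↔ d - (i + 1) ≤ (b : ℕ)) :
    IsBlockDiag d i (coordPermIsometry (Fin d) (swap a b)) := by
  intro k x hx m hm
  rw [coordPermIsometry_apply, symm_swap]
  exact hx _ fun hmem => hm ((swap_mem_blockSet_iff h₀ h₂ k m).1 hmem)

theorem HInvariant.swap_mem_aeInvariantPerms {u : EuclideanSpace ℝ (Fin d) → ℝ}
    (hu : HInvariant d i u) {a b : Fin d} (h₀ : (a : ℕ) < i + 1 ↔ (b : ℕ) < i + 1)
    (h₂ : d - (i + 1) ≤ (a : ℕ) ↔ d - (i + 1) ≤ (b : ℕ)) :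
    swap a b ∈ aeInvariantPerms u :=
  hu.1 _ (isBlockDiag_swap h₀ h₂)

theorem swapIdx_val (h : 2 * i + 2 ≤ d) (m : Fin d) :
    (swapIdx d i m : ℕ) =
      if (m : ℕ) ≤ i then (m : ℕ) + (d - 1 - i)
      else if d - 1 - i ≤ (m : ℕ) then (m : ℕ) - (d - 1 - i)
      else (m : ℕ) := by
  have := m.isLt
  exact Nat.mod_eq_of_lt (by split_ifs <;> omega)

theorem swapIdx_involutive (h : 2 * i + 2 ≤ d) : Function.Involutive (swapIdx d i) := by
  intro m
  have := m.isLt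
  ext
  rw [swapIdx_val h, swapIdx_val h]
  split_ifs <;> omega

theorem blockSwap_eq_coordPermIsometry (h : 2 * i + 2 ≤ d) :
    blockSwap d i = coordPermIsometry (Fin d) (swapIdx_involutive h).toPerm := by
  ext x m
  rw [coordPermIsometry_apply, Function.Involutive.toPerm_symm]
  rfl

end Blocks

theorem aeInvariantPerms_eq_top {d i j : ℕ} (hij : i < j) (hjd : 2 * j + 2 ≤ d)
    {u : EuclideanSpace ℝ (Fin d) → ℝ} (hui : HInvariant d i u) (huj : HInvariant d j u) :
    aeInvariantPerms u = ⊤ := by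
  have hc : i + 1 < d := by omega
  have he : d - j - 1 < d := by omega
  -- Every coordinate is joined to `i + 1` by a transposition inside one block, except those
  -- of the last `i`-block, which go through `d - j - 1` (last `j`-block, middle `i`-block).
  refine Perm.eq_top_of_forall_swap_mem ⟨i + 1, hc⟩ fun a => ?_
  have := a.isLt
  by_cases ha : (a : ℕ) < i + 1
  · exact huj.swap_mem_aeInvariantPerms (by simp; omega) (by simp; omega)
  by_cases ha' : (a : ℕ) < d - (i + 1)
  · exact hui.swap_mem_aeInvariantPerms (by simp; omega) (by simp; omega)
  · exact SubmonoidClass.swap_mem_trans _ (b := ⟨d - j - 1, he⟩)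
      (huj.swap_mem_aeInvariantPerms (by simp; omega) (by simp; omega))
      (hui.swap_mem_aeInvariantPerms (by simp; omega) (by simp; omega))

theorem two_mul_add_two_le_of_le_tau {d j : ℕ}
    (hj : (j : ℤ) ≤ (-1 : ℤ) ^ d + ((d : ℤ) - 3) / 2) : 2 * j + 2 ≤ d := by
  rcases Nat.even_or_odd d with hd | hd
  · rw [hd.neg_one_pow] at hj
    have := Nat.even_iff.1 hd
    omega
  · rw [hd.neg_one_pow] at hj
    have := Nat.odd_iff.1 hd
    omega

theorem stmt_16_general (d i j : ℕ)
    (hi : 1 ≤ (i : ℤ) ∧ (i : ℤ) ≤ (-1 : ℤ) ^ d + ((d : ℤ) - 3) / 2)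
    (hj : 1 ≤ (j : ℤ) ∧ (j : ℤ) ≤ (-1 : ℤ) ^ d + ((d : ℤ) - 3) / 2)
    (hij : i ≠ j)
    (u : EuclideanSpace ℝ (Fin d) → ℝ)
    (hui : HInvariant d i u) (huj : HInvariant d j u) :
    u =ᵐ[volume] 0 := by
  wlog hlt : i < j generalizing i j
  · exact this j i hj hi hij.symm huj hui (by omega)
  have hd : 2 * j + 2 ≤ d := two_mul_add_two_le_of_le_tau hj.2
  have htop := aeInvariantPerms_eq_top hlt hd hui huj
  have heven : ∀ᵐ x, u (blockSwap d i x) = u x := by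
    rw [blockSwap_eq_coordPermIsometry (by omega)]
    exact (Subgroup.eq_top_iff' _).1 htop _
  filter_upwards [hui.2, heven] with x hodd heven
  simp only [Pi.zero_apply]
  linarith

/-- Let `d = 6` or `d ≥ 8`, `τ_d = (−1)^d + ⌊(d−3)/2⌋`, and `i ≠ j ∈ J_d = {1,…,τ_d}`.
If `u ∈ L²(ℝ^d)` is both `H_{d,η_i}`-invariant and `H_{d,η_j}`-invariant, then `u = 0`
almost everywhere. -/
theorem stmt_16 (d i j : ℕ) (hd : d = 6 ∨ 8 ≤ d)
    (hi : 1 ≤ (i : ℤ) ∧ (i : ℤ) ≤ (-1 : ℤ) ^ d + ((d : ℤ) - 3) / 2)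
    (hj : 1 ≤ (j : ℤ) ∧ (j : ℤ) ≤ (-1 : ℤ) ^ d + ((d : ℤ) - 3) / 2)
    (hij : i ≠ j)
    (u : EuclideanSpace ℝ (Fin d) → ℝ) (hu : MemLp u 2 volume)
    (hui : HInvariant d i u) (huj : HInvariant d j u) :
    u =ᵐ[volume] 0 :=
  stmt_16_general d i j hi hj hij u hui huj
end
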